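/- Let X be a nonempty compact metric space and let f_t, f : X → ℝ be continuous functions with f_t → f uniformly on X. Let M_t = argmin_{x∈X} f_t(x) and M = argmin_{x∈X} f(x) (both nonempty by compactness). Then for every ε > 0 there exists T such that for all t ≥ T and all x ∈ M_t, inf_{y∈M} d(x,y) ≤ ε; equivalently, sup_{x∈M_t} dist(x, M) → 0 as t → ∞. -/

import Mathlib

open Filter Topology Metric

/-!
On the closed set of points at distance at least `ε` from `M = argmin f`, the function `f`
attains a minimum strictly above some value of `f`; this gap `δ` makes every point whose
value is within `δ` of all values of `f` lie within `ε` of `M`. A function uniformly within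
`δ / 2` of `f` has all its minimizers in that position.
-/

theorem exists_pos_forall_infDist_setOf_isMin_lt {X : Type*} [MetricSpace X] [CompactSpace X]
    {f : X → ℝ} (hf : Continuous f) {ε : ℝ} (hε : 0 < ε) :
    ∃ δ > 0, ∀ x, (∀ y, f x < f y + δ) → infDist x {x | ∀ y, f x ≤ f y} < ε := by
  set M := {x | ∀ y, f x ≤ f y}
  set S := {x | ε ≤ infDist x M}
  have hS : IsClosed S := isClosed_le continuous_const (continuous_infDist_pt M)
  rcases S.eq_empty_or_nonempty with hSe | hSne
  · refine ⟨1, one_pos, fun x _ => not_le.1 fun hx => ?_⟩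
    exact hSe.subset hx
  obtain ⟨z, hzS, hz⟩ := hS.isCompact.exists_isMinOn hSne hf.continuousOn
  have hzM : z ∉ M := fun hzM => by
    have : ε ≤ 0 := by simpa [S, infDist_zero_of_mem hzM] using hzS
    linarith
  obtain ⟨y, hy⟩ : ∃ y, f y < f z := by simpa [M] using hzM
  refine ⟨f z - f y, sub_pos.2 hy, fun x hx => not_le.1 fun hxS => ?_⟩
  have := hx y
  linarith [isMinOn_iff.1 hz x hxS]

theorem forall_lt_add_of_forall_le_of_forall_dist_lt {X : Type*} {f g : X → ℝ} {x : X}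
    {δ : ℝ} (hx : ∀ y, g x ≤ g y) (hfg : ∀ y, dist (f y) (g y) < δ / 2) :
    ∀ y, f x < f y + δ := by
  intro y
  have hx' := abs_lt.1 (hfg x)
  have hy' := abs_lt.1 (hfg y)
  linarith [hx y]

theorem tendsto_sSup_image_nhds_zero {ι α : Type*} {l : Filter ι} {A : ι → Set α}
    {h : α → ℝ} (h0 : ∀ x, 0 ≤ h x) (hA : ∀ ε > 0, ∀ᶠ t in l, ∀ x ∈ A t, h x ≤ ε) :
    Tendsto (fun t => sSup (h '' A t)) l (𝓝 0) := by
  refine tendsto_order.2 ⟨fun a ha => ?_, fun a ha => ?_⟩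
  · refine Eventually.of_forall fun t => ha.trans_le (Real.sSup_nonneg ?_)
    rintro _ ⟨x, -, rfl⟩
    exact h0 x
  · filter_upwards [hA (a / 2) (half_pos ha)] with t ht
    refine (Real.sSup_le ?_ (half_pos ha).le).trans_lt (half_lt_self ha)
    rintro _ ⟨x, hx, rfl⟩
    exact ht x hx

theorem stmt3_general {X : Type*} [MetricSpace X] [CompactSpace X]
    (ft : ℕ → X → ℝ) (f : X → ℝ)
    (hfc : Continuous f)
    (hunif : TendstoUniformly ft f atTop)
    (Mt : ℕ → Set X) (hMt : ∀ t, Mt t = {x | ∀ y, ft t x ≤ ft t y})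
    (M : Set X) (hM : M = {x | ∀ y, f x ≤ f y}) :
    (∀ ε > (0 : ℝ), ∃ T : ℕ, ∀ t ≥ T, ∀ x ∈ Mt t, Metric.infDist x M ≤ ε) ∧
    Tendsto (fun t => sSup ((fun x => Metric.infDist x M) '' (Mt t)))
      atTop (nhds 0) := by
  have hclose : ∀ ε > (0 : ℝ), ∀ᶠ t in atTop, ∀ x ∈ Mt t, infDist x M ≤ ε := by
    intro ε hε
    obtain ⟨δ, hδ, hnear⟩ := exists_pos_forall_infDist_setOf_isMin_lt hfc hε
    filter_upwards [tendstoUniformly_iff.1 hunif (δ / 2) (half_pos hδ)] with t ht x hx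
    rw [hMt] at hx
    rw [hM]
    exact (hnear x (forall_lt_add_of_forall_le_of_forall_dist_lt hx ht)).le
  exact ⟨fun ε hε => (hclose ε hε).exists_forall_of_atTop,
    tendsto_sSup_image_nhds_zero (fun _ => infDist_nonneg) hclose⟩

/-- Under uniform convergence of continuous functions on a nonempty
compact metric space, the minimizer sets of `ft t` converge to the minimizer set
of `f`: eventually every minimizer of `ft t` is within `ε` of `M`, equivalently
the deviation `sup_{x ∈ Mt t} dist(x, M)` tends to `0`. -/
theorem stmt3 {X : Type*} [MetricSpace X] [CompactSpace X] [Nonempty X]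
    (ft : ℕ → X → ℝ) (f : X → ℝ)
    (hftc : ∀ t, Continuous (ft t)) (hfc : Continuous f)
    (hunif : TendstoUniformly ft f atTop)
    (Mt : ℕ → Set X) (hMt : ∀ t, Mt t = {x | ∀ y, ft t x ≤ ft t y})
    (M : Set X) (hM : M = {x | ∀ y, f x ≤ f y}) :
    (∀ ε > (0 : ℝ), ∃ T : ℕ, ∀ t ≥ T, ∀ x ∈ Mt t, Metric.infDist x M ≤ ε) ∧
    Tendsto (fun t => sSup ((fun x => Metric.infDist x M) '' (Mt t)))
      atTop (nhds 0) :=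
  stmt3_general ft f hfc hunif Mt hMt M hM
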